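/- arXiv:2003.02843 — 2 statements merged into one kernel-verified Lean document; each statement's English description precedes it below -/
import Mathlib

section
/- Suppose a unitary U on a chain of N+2 qubits (sites 0,…,N+1) maps each Jordan-Wigner Majorana as U γ_k U† = γ_k for k ∈ {0, 2N+3} and U γ_k U† = (−1)^{k−1} γ_{2N+3−k} for 1 ≤ k ≤ 2N+2. Then for each 0 ≤ k ≤ N, the parity string Λ_{0,k} = ∏_{j=0}^{k}(−σ_z^j) satisfies U Λ_{0,k} U† = i·σ_x^0·σ_x^{N+1}·Λ_{0,N−k}. -/
noncomputable section
open scoped Matrix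

/-- Configuration space of a chain of `n` qubits. -/
abbrev Cfg (n : ℕ) := Fin n → Fin 2

/-- Operators on a chain of `n` qubits. -/
abbrev Op (n : ℕ) := Matrix (Cfg n) (Cfg n) ℂ

def pX : Matrix (Fin 2) (Fin 2) ℂ := !![0, 1; 1, 0]
def pY : Matrix (Fin 2) (Fin 2) ℂ := !![0, -Complex.I; Complex.I, 0]
def pZ : Matrix (Fin 2) (Fin 2) ℂ := !![1, 0; 0, -1]

/-- The single-qubit operator `P` acting on site `j` (identity elsewhere). -/
def site {n : ℕ} (P : Matrix (Fin 2) (Fin 2) ℂ) (j : Fin n) : Op n :=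
  fun f g => if ∀ i, i ≠ j → f i = g i then P (f j) (g j) else 0

/-- The Jordan-Wigner parity string `∏_{j=0}^{k-1} (−σ_z^j)` over sites `j < k`. -/
def sites {n : ℕ} (F : Fin n → Matrix (Fin 2) (Fin 2) ℂ) : Op n :=
  fun f g => ∏ i, F i (f i) (g i)

lemma sites_mul {n : ℕ} (F G : Fin n → Matrix (Fin 2) (Fin 2) ℂ) :
    sites F * sites G = sites (fun i => F i * G i) := by
  ext f g
  show ∑ h : Cfg n, (∏ i, F i (f i) (h i)) * ∏ i, G i (h i) (g i)
      = ∏ i, (F i * G i) (f i) (g i)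
  have : ∀ h : Cfg n, (∏ i, F i (f i) (h i)) * ∏ i, G i (h i) (g i)
      = ∏ i, (F i (f i) (h i) * G i (h i) (g i)) := by
    intro h; rw [Finset.prod_mul_distrib]
  simp only [this]
  have e := Fintype.prod_sum (fun (i : Fin n) (a : Fin 2) => F i (f i) a * G i a (g i))
  rw [← e]
  simp [Matrix.mul_apply]

lemma sites_one {n : ℕ} : sites (fun _ : Fin n => (1 : Matrix (Fin 2) (Fin 2) ℂ)) = 1 := by
  ext f g
  show (∏ i, (1 : Matrix (Fin 2) (Fin 2) ℂ) (f i) (g i)) = (1 : Op n) f g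
  simp only [Matrix.one_apply, Finset.prod_boole]
  by_cases h : f = g
  · simp [h]
  · rw [if_neg h, if_neg]
    simpa [funext_iff] using h

lemma site_eq_sites {n : ℕ} (P : Matrix (Fin 2) (Fin 2) ℂ) (j : Fin n) :
    site P j = sites (fun i => if i = j then P else 1) := by
  ext f g
  simp only [site, sites]
  split_ifs with h
  · rw [Finset.prod_eq_single j]
    · simp
    · intro b _ hb
      simp [hb, Matrix.one_apply, h b hb]
    · simp
  · push_neg at h
    obtain ⟨i, hij, hfg⟩ := h
    refine (Finset.prod_eq_zero (Finset.mem_univ i) ?_).symm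
    simp [hij, Matrix.one_apply, hfg]

lemma site_mul_site {n : ℕ} (P Q : Matrix (Fin 2) (Fin 2) ℂ) (j : Fin n) :
    site P j * site Q j = site (P * Q) j := by
  rw [site_eq_sites, site_eq_sites, site_eq_sites, sites_mul]
  have : (fun i : Fin n => (if i = j then P else 1) * if i = j then Q else 1)
      = fun i => if i = j then P * Q else 1 := by
    funext i; split_ifs <;> simp
  rw [this]

lemma site_comm {n : ℕ} (P Q : Matrix (Fin 2) (Fin 2) ℂ) {i j : Fin n} (h : i ≠ j) :
    site P i * site Q j = site Q j * site P i := by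
  rw [site_eq_sites P, site_eq_sites Q, sites_mul, sites_mul]
  have : (fun l : Fin n => (if l = i then P else 1) * if l = j then Q else 1)
      = fun l => (if l = j then Q else 1) * if l = i then P else 1 := by
    funext l
    by_cases hi : l = i <;> by_cases hj : l = j <;> simp_all
  rw [this]

lemma site_one {n : ℕ} (j : Fin n) : site (1 : Matrix (Fin 2) (Fin 2) ℂ) j = 1 := by
  rw [site_eq_sites]
  have : (fun i : Fin n => if i = j then (1 : Matrix (Fin 2) (Fin 2) ℂ) else 1) = fun _ => 1 := by
    funext i; split_ifs <;> rfl
  rw [this, sites_one]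

lemma site_smul {n : ℕ} (c : ℂ) (P : Matrix (Fin 2) (Fin 2) ℂ) (j : Fin n) :
    site (c • P) j = c • site P j := by
  ext f g
  simp only [site, Matrix.smul_apply]
  split_ifs <;> simp

lemma pZ_sq : pZ * pZ = 1 := by
  ext i j; fin_cases i <;> fin_cases j <;>
    simp [pZ, Matrix.mul_apply, Fin.sum_univ_two, Matrix.one_apply]

lemma pXY : pX * pY = Complex.I • pZ := by
  ext i j; fin_cases i <;> fin_cases j <;>
    simp [pX, pY, pZ, Matrix.mul_apply, Fin.sum_univ_two]

lemma pYX : pY * pX = (-Complex.I) • pZ := by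
  ext i j; fin_cases i <;> fin_cases j <;>
    simp [pX, pY, pZ, Matrix.mul_apply, Fin.sum_univ_two]

def parityBelow (n : ℕ) : ℕ → Op n
  | 0 => 1
  | k + 1 => parityBelow n k * (if h : k < n then -(site pZ ⟨k, h⟩) else 1)

/-- The Jordan-Wigner Majorana operator:
`γ_{2k} = (∏_{j<k}(−σ_z^j))σ_x^k`, `γ_{2k+1} = (∏_{j<k}(−σ_z^j))σ_y^k`. -/
def maj (n : ℕ) (m : ℕ) : Op n :=
  if h : m / 2 < n then
    parityBelow n (m / 2) * site (if m % 2 = 0 then pX else pY) ⟨m / 2, h⟩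
  else 0


lemma parity_comm {n : ℕ} (P : Matrix (Fin 2) (Fin 2) ℂ) :
    ∀ (k : ℕ) (j : Fin n), k ≤ j.1 →
      parityBelow n k * site P j = site P j * parityBelow n k := by
  intro k
  induction k with
  | zero => intro j _; simp [parityBelow]
  | succ k ih =>
    intro j h
    rw [parityBelow]
    by_cases hk : k < n
    · rw [dif_pos hk]
      have hne : (⟨k, hk⟩ : Fin n) ≠ j := by
        simp only [ne_eq, Fin.ext_iff]; omega
      simp only [mul_neg, neg_mul]
      congr 1
      rw [mul_assoc, site_comm pZ P hne, ← mul_assoc, ih j (by omega), mul_assoc]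
    · rw [dif_neg hk, mul_one, ih j (by omega)]

lemma parity_sq {n : ℕ} : ∀ k : ℕ, parityBelow n k * parityBelow n k = 1 := by
  intro k
  induction k with
  | zero => simp [parityBelow]
  | succ k ih =>
    rw [parityBelow]
    by_cases hk : k < n
    · rw [dif_pos hk]
      have hc := parity_comm pZ k (⟨k, hk⟩ : Fin n) (le_refl k)
      simp only [mul_neg, neg_mul, neg_neg]
      rw [mul_assoc, ← mul_assoc (site pZ _), ← hc, mul_assoc, ← mul_assoc,
        ih, one_mul, site_mul_site, pZ_sq, site_one]
    · rw [dif_neg hk, mul_one, ih]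

lemma maj_even {n : ℕ} (j : ℕ) (h : j < n) :
    maj n (2 * j) = parityBelow n j * site pX ⟨j, h⟩ := by
  have h1 : 2 * j / 2 = j := by omega
  have h2 : 2 * j % 2 = 0 := by omega
  simp [maj, h1, h2, h]

lemma maj_odd {n : ℕ} (j : ℕ) (h : j < n) :
    maj n (2 * j + 1) = parityBelow n j * site pY ⟨j, h⟩ := by
  have h1 : (2 * j + 1) / 2 = j := by omega
  have h2 : (2 * j + 1) % 2 = 1 := by omega
  simp [maj, h1, h2, h]

lemma gamma_pair {n : ℕ} (j : ℕ) (h : j < n) :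
    maj n (2 * j) * maj n (2 * j + 1) = Complex.I • site pZ ⟨j, h⟩ := by
  rw [maj_even j h, maj_odd j h, mul_assoc, ← mul_assoc (site pX _),
    ← parity_comm pX j ⟨j, h⟩ (le_refl j), mul_assoc, ← mul_assoc,
    parity_sq, one_mul, site_mul_site, pXY, site_smul]

lemma gamma_pair_rev {n : ℕ} (j : ℕ) (h : j < n) :
    maj n (2 * j + 1) * maj n (2 * j) = (-Complex.I) • site pZ ⟨j, h⟩ := by
  rw [maj_even j h, maj_odd j h, mul_assoc, ← mul_assoc (site pY _),
    ← parity_comm pY j ⟨j, h⟩ (le_refl j), mul_assoc, ← mul_assoc,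
    parity_sq, one_mul, site_mul_site, pYX, site_smul]

/-- If a unitary `U` on the extended chain fixes the edge Majoranas and maps
`γ_k ↦ (−1)^{k−1} γ_{2N+3−k}` for `1 ≤ k ≤ 2N+2`, then the parity strings map
as `U Λ_{0,k} U† = i σ_x^0 σ_x^{N+1} Λ_{0,N−k}` for all `0 ≤ k ≤ N`. -/
theorem stmt_15 (N : ℕ) (U : Op (N + 2))
    (hU : U * Uᴴ = 1) (hU' : Uᴴ * U = 1)
    (h0 : U * maj (N + 2) 0 * Uᴴ = maj (N + 2) 0)
    (hend : U * maj (N + 2) (2 * N + 3) * Uᴴ = maj (N + 2) (2 * N + 3))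
    (hmid : ∀ k : ℕ, 1 ≤ k → k ≤ 2 * N + 2 →
      U * maj (N + 2) k * Uᴴ = ((-1 : ℂ) ^ (k - 1)) • maj (N + 2) (2 * N + 3 - k)) :
    ∀ k ≤ N,
      U * parityBelow (N + 2) (k + 1) * Uᴴ =
        Complex.I •
          (site pX (0 : Fin (N + 2)) * site pX (Fin.last (N + 1)) *
            parityBelow (N + 2) (N - k + 1)) := by
  have cancel : ∀ X : Op (N + 2), Uᴴ * (U * X) = X := by
    intro X; rw [← Matrix.mul_assoc, hU', Matrix.one_mul]
  have conj_mul : ∀ A B : Op (N + 2), U * (A * B) * Uᴴ = (U * A * Uᴴ) * (U * B * Uᴴ) := by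
    intro A B; simp only [Matrix.mul_assoc, cancel]
  have conj_smul : ∀ (c : ℂ) (A : Op (N + 2)), U * (c • A) * Uᴴ = c • (U * A * Uᴴ) := by
    intro c A; rw [Matrix.mul_smul, Matrix.smul_mul]
  have key : ∀ (j m : ℕ) (hj2 : j < N + 2) (hm2 : m < N + 2),
      1 ≤ j → 1 ≤ m → j + m = N + 1 →
      U * (-(site pZ (⟨j, hj2⟩ : Fin (N + 2)))) * Uᴴ
        = -(site pZ (⟨m, hm2⟩ : Fin (N + 2))) := by
    intro j m hj2 hm2 h1 h1' h2
    have e1 : -(site pZ (⟨j, hj2⟩ : Fin (N + 2)))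
        = Complex.I • (maj (N + 2) (2 * j) * maj (N + 2) (2 * j + 1)) := by
      rw [gamma_pair j hj2, smul_smul, Complex.I_mul_I, neg_one_smul]
    rw [e1, conj_smul, conj_mul, hmid (2 * j) (by omega) (by omega),
      hmid (2 * j + 1) (by omega) (by omega)]
    simp only [show 2 * N + 3 - 2 * j = 2 * m + 1 from by omega,
      show 2 * N + 3 - (2 * j + 1) = 2 * m from by omega,
      show 2 * j + 1 - 1 = 2 * j from rfl]
    rw [smul_mul_assoc, mul_smul_comm, gamma_pair_rev m hm2]
    have hodd : ((-1 : ℂ)) ^ (2 * j - 1) = -1 := Odd.neg_one_pow ⟨j - 1, by omega⟩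
    have heven : ((-1 : ℂ)) ^ (2 * j) = 1 := Even.neg_one_pow ⟨j, by omega⟩
    rw [hodd, heven, one_smul, smul_smul, smul_smul,
      show Complex.I * -1 * -Complex.I = -1 from by
        simp [Complex.I_mul_I], neg_one_smul]
  intro k
  induction k with
  | zero =>
    intro _
    have h02 : (0 : ℕ) < N + 2 := by omega
    have hm0 : maj (N + 2) 0 = site pX (⟨0, h02⟩ : Fin (N + 2)) := by
      have h := maj_even (n := N + 2) 0 h02
      rw [show 2 * 0 = 0 from rfl] at h
      rw [h, parityBelow, one_mul]
    have em : parityBelow (N + 2) (0 + 1)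
        = Complex.I • (maj (N + 2) 0 * maj (N + 2) 1) := by
      rw [parityBelow, parityBelow, one_mul, dif_pos h02]
      have h := gamma_pair (n := N + 2) 0 h02
      rw [show 2 * 0 = 0 from rfl, show 2 * 0 + 1 = 1 from rfl] at h
      rw [h, smul_smul, Complex.I_mul_I, neg_one_smul]
    rw [em, conj_smul, conj_mul, h0, hmid 1 (le_refl 1) (by omega)]
    simp only [show (1 : ℕ) - 1 = 0 from rfl, pow_zero, one_smul,
      show 2 * N + 3 - 1 = 2 * (N + 1) from by omega, Nat.sub_zero]
    rw [maj_even (n := N + 2) (N + 1) (by omega), hm0]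
    have f0 : (0 : Fin (N + 2)) = ⟨0, h02⟩ := rfl
    have flast : Fin.last (N + 1) = (⟨N + 1, by omega⟩ : Fin (N + 2)) := rfl
    rw [f0, flast, parity_comm pX (N + 1) (⟨N + 1, by omega⟩ : Fin (N + 2)) (Nat.le_refl _),
      ← mul_assoc]
  | succ k ih =>
    intro hk
    rw [parityBelow, dif_pos (show k + 1 < N + 2 by omega), conj_mul, ih (by omega),
      key (k + 1) (N - k) (by omega) (by omega) (by omega) (by omega) (by omega)]
    have hP : parityBelow (N + 2) (N - k + 1) * -(site pZ (⟨N - k, by omega⟩ : Fin (N + 2)))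
        = parityBelow (N + 2) (N - k) := by
      conv_lhs => rw [parityBelow]
      rw [dif_pos (show N - k < N + 2 by omega), mul_assoc, neg_mul_neg,
        site_mul_site, pZ_sq, site_one, mul_one]
    rw [show N - (k + 1) + 1 = N - k from by omega, smul_mul_assoc, mul_assoc, hP]

end
end

section
/- Consider 2n tokens on positions 1,…,2n undergoing an odd-even transposition network: in odd rounds, swap pairs (1,2),(3,4),…; in even rounds, swap pairs (2,3),(4,5),…. After exactly n rounds of alternating applications (starting with odd), the token initially at position k is at position 2n+1−k; i.e., the network implements the full reversal permutation in n rounds. -/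
/-- The odd layer of the odd-even transposition network on positions
`0,…,2n−1` (zero-based): swap the pairs `(0,1),(2,3),…`. -/
def oddLayer (p : ℕ) : ℕ := if p % 2 = 0 then p + 1 else p - 1

/-- The even layer of the odd-even transposition network on positions
`0,…,2n−1`: swap the pairs `(1,2),(3,4),…`, fixing the two endpoints. -/
def evenLayer (n : ℕ) (p : ℕ) : ℕ :=
  if p = 0 ∨ p = 2 * n - 1 then p
  else if p % 2 = 1 then p + 1 else p - 1

/-- The position of the token initially at position `k` after `r` rounds of
the network; each round applies the odd layer followed by the even layer. -/
def oePos (n : ℕ) : ℕ → ℕ → ℕ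
  | 0, k => k
  | r + 1, k => evenLayer n (oddLayer (oePos n r k))

/-!
Unfold the segment `0,…,2n−1` onto a circle of length `4n`: a token at an even position is
moving right and sits at `p`, a token at an odd position is moving left and sits at `4n−1−p`.
One round of the network is then the rotation by `2` of this circle (the two ends of the segment
are where a token turns around), so after `n` rounds every token has been rotated by `2n`,
which on the segment is the reflection `p ↦ 2n−1−p`.
-/

def circlePos (n p : ℕ) : ℕ := if p % 2 = 0 then p else 4 * n - 1 - p

lemma circlePos_lt {n p : ℕ} (hp : p < 2 * n) : circlePos n p < 4 * n := by
  unfold circlePos; split_ifs <;> omega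

lemma natCast_circlePos_injOn (n : ℕ) :
    Set.InjOn (fun p ↦ (circlePos n p : ZMod (4 * n))) (Set.Iio (2 * n)) := by
  intro p hp q hq h
  rw [Set.mem_Iio] at hp hq
  rw [ZMod.natCast_eq_natCast_iff', Nat.mod_eq_of_lt (circlePos_lt hp),
    Nat.mod_eq_of_lt (circlePos_lt hq)] at h
  unfold circlePos at h; split_ifs at h <;> omega

lemma natCast_eq_of_eq_or_add_eq {a b m : ℕ} (h : a = b ∨ a + m = b) : (a : ZMod m) = b := by
  rcases h with rfl | rfl <;> simp

lemma evenLayer_oddLayer_lt {n p : ℕ} (hp : p < 2 * n) : evenLayer n (oddLayer p) < 2 * n := by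
  unfold evenLayer oddLayer; split_ifs <;> omega

lemma circlePos_evenLayer_oddLayer {n p : ℕ} (hp : p < 2 * n) :
    (circlePos n (evenLayer n (oddLayer p)) : ZMod (4 * n)) = (circlePos n p + 2 : ℕ) := by
  apply natCast_eq_of_eq_or_add_eq
  unfold circlePos evenLayer oddLayer; grind

lemma oePos_lt_and_circlePos (n : ℕ) {k : ℕ} (hk : k < 2 * n) (r : ℕ) :
    oePos n r k < 2 * n ∧
      (circlePos n (oePos n r k) : ZMod (4 * n)) = (circlePos n k + 2 * r : ℕ) := by
  induction r with
  | zero => exact ⟨hk, rfl⟩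
  | succ r ih =>
    obtain ⟨hlt, hcirc⟩ := ih
    refine ⟨evenLayer_oddLayer_lt hlt, ?_⟩
    rw [oePos, circlePos_evenLayer_oddLayer hlt]
    push_cast at hcirc ⊢
    rw [hcirc]; ring

lemma circlePos_reflect {n k : ℕ} (hk : k < 2 * n) :
    (circlePos n (2 * n - 1 - k) : ZMod (4 * n)) = (circlePos n k + 2 * n : ℕ) := by
  apply natCast_eq_of_eq_or_add_eq
  unfold circlePos; split_ifs <;> omega

theorem stmt_19_general (n : ℕ) : ∀ k < 2 * n, oePos n n k = 2 * n - 1 - k := by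
  intro k hk
  obtain ⟨hlt, hcirc⟩ := oePos_lt_and_circlePos n hk n
  exact natCast_circlePos_injOn n hlt (by simp only [Set.mem_Iio]; omega)
    (hcirc.trans (circlePos_reflect hk).symm)

/-- After exactly `n` rounds of the alternating odd-even transposition network
on `2n` positions (starting with the odd layer), the token initially at
position `k` ends at position `2n−1−k` (zero-based; `2n+1−k` one-based):
the network implements the full reversal permutation in `n` rounds. -/
theorem stmt_19 (n : ℕ) (hn : 1 ≤ n) : ∀ k < 2 * n, oePos n n k = 2 * n - 1 - k :=
  stmt_19_general n
end
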